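/- arXiv:0806.2421 — 4 statements merged into one kernel-verified Lean document; each statement's English description precedes it below -/
import Mathlib

section
/- For every positive integer k, setting n = 6k, the graph G(n) has no dominating set of cardinality at most k; equivalently, every dominating set of G(n) has more than n/6 vertices. -/
/-!
Split the vertices into the triangles `S_i` and let `d i = |D ∩ S_i|`, padded by zeros at both
ends. A vertex outside `S_i` with a neighbour in `S_i` lies in `S_{i-1}` or `S_{i+1}`, and no
vertex is adjacent to all of `S_i`; so `d i = 0` forces `d (i-1) + d (i+1) ≥ 2`, and in any case
`d (i-1) + 2 d i + d (i+1) ≥ 2`. Summing over the `n/3` triangles counts every vertex of `D`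
four times, except that `d 1` and `d (n/3)` are counted only three times, so
`4|D| ≥ 2 (n/3) + d 1 + d (n/3)`. This is strict even when `d 1 = 0`, since then `d 2 ≥ 2`
and the term for `i = 2` is at least `4`.
-/

/-- The relation generating the edges of the graph `G(n)` from the paper
(vertices are 0-indexed: `a : Fin n` corresponds to `v_{a+1}`).
The clauses correspond to: the triangles `S_i`, the edges `v_j v_{j+3}`,
and the edges `v_{3i-2} v_{3i+2}`, `v_{3i-1} v_{3i+3}`, `v_{3i} v_{3i+1}`. -/
def GnRel (n : ℕ) (a b : Fin n) : Prop :=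
  ((a : ℕ) / 3 = (b : ℕ) / 3) ∨
  ((b : ℕ) = (a : ℕ) + 3) ∨
  ((b : ℕ) = (a : ℕ) + 4 ∧ (a : ℕ) % 3 = 0) ∨
  ((b : ℕ) = (a : ℕ) + 4 ∧ (a : ℕ) % 3 = 1) ∨
  ((b : ℕ) = (a : ℕ) + 1 ∧ (a : ℕ) % 3 = 2)

/-- The graph `G(n)` from the paper. -/
def Gn (n : ℕ) : SimpleGraph (Fin n) := SimpleGraph.fromRel (GnRel n)

open Finset

theorem sum_range_neighbours_add {m : ℕ} {d : ℕ → ℕ} (h0 : d 0 = 0) (hm1 : d (m + 1) = 0) :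
    ∑ i ∈ range m, (d i + 2 * d (i + 1) + d (i + 2)) + d 1 + d m =
      4 * ∑ i ∈ range (m + 2), d i := by
  set S := ∑ i ∈ range (m + 2), d i
  have hS : S = ∑ i ∈ range m, d (i + 1) := by
    simp only [S, sum_range_succ, sum_range_succ' _ m, h0, hm1, add_zero]
  have hlow : ∑ i ∈ range m, d i + d m = S := by
    rw [← sum_range_succ, sum_range_succ', h0, add_zero, hS]
  have hhigh : ∑ i ∈ range m, d (i + 2) + d 1 = S := by
    rw [← sum_range_succ' (fun i => d (i + 1)), sum_range_succ, hm1, add_zero, hS]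
  rw [sum_add_distrib, sum_add_distrib, ← mul_sum]
  omega

theorem lt_two_mul_sum_of_two_le_neighbours {m : ℕ} (hm : 0 < m) {d : ℕ → ℕ}
    (h0 : d 0 = 0) (hm1 : d (m + 1) = 0)
    (hzero : ∀ i < m, d (i + 1) = 0 → 2 ≤ d i + d (i + 2)) :
    m < 2 * ∑ i ∈ range (m + 2), d i := by
  have hcount := sum_range_neighbours_add h0 hm1
  have hlocal : ∀ i ∈ range m, 2 ≤ d i + 2 * d (i + 1) + d (i + 2) := by
    intro i hi
    have := hzero i (mem_range.1 hi)
    omega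
  by_cases hd1 : d 1 = 0
  · have hd2 : 2 ≤ d 2 := by simpa [h0, hd1] using hzero 0 hm hd1
    have hm2 : 1 < m := by
      by_contra! hm2
      obtain rfl : m = 1 := by omega
      norm_num at hm1
      omega
    have hstrict : ∑ _i ∈ range m, 2 < ∑ i ∈ range m, (d i + 2 * d (i + 1) + d (i + 2)) :=
      sum_lt_sum hlocal ⟨1, mem_range.2 hm2, show 2 < d 1 + 2 * d 2 + d 3 by omega⟩
    simp only [sum_const, card_range, smul_eq_mul] at hstrict
    omega
  · have hsum : ∑ _i ∈ range m, 2 ≤ ∑ i ∈ range m, (d i + 2 * d (i + 1) + d (i + 2)) :=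
      sum_le_sum hlocal
    simp only [sum_const, card_range, smul_eq_mul] at hsum
    omega

namespace Gn

/-- The index `i` of the triangle `S_i ∋ v`, 1-based as in the paper, so that `0` and `n/3 + 1`
index empty padding triangles. -/
def triangle {n : ℕ} (v : Fin n) : ℕ := v / 3 + 1

def triangleCount {n : ℕ} (D : Finset (Fin n)) (i : ℕ) : ℕ := #{v ∈ D | triangle v = i}

variable {n : ℕ}

theorem triangle_le_add_one_of_adj {u v : Fin n} (h : (Gn n).Adj u v) :
    triangle u ≤ triangle v + 1 := by
  simp only [Gn, SimpleGraph.fromRel_adj, GnRel, triangle] at h ⊢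
  omega

theorem exists_triangle_not_adj (u : Fin n) {t : ℕ} (ht : 3 * t + 2 < n) :
    ∃ v : Fin n, triangle v = t + 1 ∧ ¬ (Gn n).Adj u v := by
  by_contra! h
  have h0 := h ⟨3 * t, by omega⟩ (by simp only [triangle]; omega)
  have h1 := h ⟨3 * t + 1, by omega⟩ (by simp only [triangle]; omega)
  have h2 := h ⟨3 * t + 2, by omega⟩ (by simp only [triangle]; omega)
  simp only [Gn, SimpleGraph.fromRel_adj, GnRel, ne_eq, Fin.ext_iff] at h0 h1 h2
  omega

theorem two_le_triangleCount_add {D : Finset (Fin n)}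
    (hdom : ∀ v : Fin n, v ∈ D ∨ ∃ u ∈ D, (Gn n).Adj u v) {t : ℕ} (ht : 3 * t + 2 < n)
    (hempty : triangleCount D (t + 1) = 0) :
    2 ≤ triangleCount D t + triangleCount D (t + 2) := by
  set N := {u ∈ D | triangle u = t ∨ triangle u = t + 2}
  have hN : #N ≤ triangleCount D t + triangleCount D (t + 2) := by
    rw [show N = _ from filter_or _ _ _]
    exact card_union_le _ _
  have hnotD : ∀ v ∈ D, triangle v ≠ t + 1 := by
    intro v hv hvt
    exact (card_pos.2 ⟨v, mem_filter.2 ⟨hv, hvt⟩⟩).ne' hempty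
  have hdomN : ∀ v, triangle v = t + 1 → ∃ u ∈ N, (Gn n).Adj u v := by
    intro v hv
    obtain hvD | ⟨u, huD, huv⟩ := hdom v
    · exact absurd hv (hnotD v hvD)
    · have := triangle_le_add_one_of_adj huv
      have := triangle_le_add_one_of_adj huv.symm
      have := hnotD u huD
      exact ⟨u, mem_filter.2 ⟨huD, by omega⟩, huv⟩
  -- a dominator `u₀` of `S_{t+1}` misses some `v ∈ S_{t+1}`, dominated by another member of `N`
  obtain ⟨u₀, hu₀, -⟩ := hdomN ⟨3 * t, by omega⟩ (by simp only [triangle]; omega)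
  obtain ⟨v, hv, hu₀v⟩ := exists_triangle_not_adj u₀ ht
  obtain ⟨u, hu, huv⟩ := hdomN v hv
  have : 1 < #N := one_lt_card.2 ⟨u₀, hu₀, u, hu, fun h => hu₀v (h ▸ huv)⟩
  omega

theorem lt_six_mul_card_of_dominating (hn : 3 ∣ n) (hn0 : 0 < n) (D : Finset (Fin n))
    (hdom : ∀ v : Fin n, v ∈ D ∨ ∃ u ∈ D, (Gn n).Adj u v) :
    n < 6 * #D := by
  obtain ⟨m, rfl⟩ := hn
  have hcard : #D = ∑ i ∈ range (m + 2), triangleCount D i :=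
    card_eq_sum_card_fiberwise fun v _ => by
      simp only [coe_range, Set.mem_Iio, triangle]
      omega
  have hcount_zero : ∀ i, (∀ v : Fin (3 * m), triangle v ≠ i) → triangleCount D i = 0 :=
    fun i hi => card_eq_zero.2 (filter_eq_empty_iff.2 fun v _ => hi v)
  have := lt_two_mul_sum_of_two_le_neighbours (d := triangleCount D) (by omega)
    (hcount_zero 0 fun v => by simp only [triangle]; omega)
    (hcount_zero (m + 1) fun v => by simp only [triangle]; omega)
    fun i hi => two_le_triangleCount_add hdom (by omega)
  omega

end Gn

/-- For every positive integer `k`, with `n = 6k`, the graph `G(n)` has no dominating set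
of cardinality at most `k`; equivalently, every dominating set of `G(n)` has more than
`n/6` vertices. -/
theorem Gn_no_small_dominating_set (k : ℕ) (hk : 0 < k)
    (D : Finset (Fin (6 * k)))
    (hdom : ∀ v : Fin (6 * k), v ∈ D ∨ ∃ u ∈ D, (Gn (6 * k)).Adj u v) :
    k < D.card := by
  have := Gn.lt_six_mul_card_of_dominating (Dvd.intro (2 * k) (by ring)) (by omega) D hdom
  omega
end

section
/- Let S = {(x,y) ∈ ℤ × ℤ : x + 2y ≡ 0 (mod 7)}. Then every vertex of G_∞ lies in the closed neighborhood of exactly one element of S. In particular, S is a dominating set of G_∞ in which the closed neighborhoods of distinct elements are pairwise disjoint (S uses 'every seventh vertex' of G_∞). -/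
/-!
The closed neighbourhood of the origin in `Ginf` consists of the seven offsets
`0, ±(1,0), ±(0,1), ±(1,1)`, whose weights `x + 2y` are `0, ±1, ±2, ±3`: one in each residue
class mod 7. Hence the weight mod 7 maps the neighbourhood bijectively onto `ZMod 7`, and the
translates of the neighbourhood by the kernel of the weight tile `ℤ × ℤ`.
-/

/-- The 6-regular triangular lattice `G∞`: vertices are `ℤ × ℤ`, with distinct
vertices `(a,b)` and `(c,d)` adjacent iff
`(c-a, d-b) ∈ {(1,0), (-1,0), (0,1), (0,-1), (1,1), (-1,-1)}`. -/
def Ginf : SimpleGraph (ℤ × ℤ) :=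
  SimpleGraph.fromRel fun p q =>
    (q.1 - p.1, q.2 - p.2) ∈
      ({(1, 0), (-1, 0), (0, 1), (0, -1), (1, 1), (-1, -1)} : Set (ℤ × ℤ))

theorem AddMonoidHom.existsUnique_map_eq_zero_and_sub_mem {G H : Type*} [AddCommGroup G]
    [AddGroup H] (φ : G →+ H) {D : Set G} (hD : Set.BijOn φ D Set.univ) (v : G) :
    ∃! u, φ u = 0 ∧ v - u ∈ D := by
  obtain ⟨d, hdD, hd⟩ := hD.surjOn (Set.mem_univ (φ v))
  refine ⟨v - d, ⟨by rw [map_sub, hd, sub_self], by rwa [sub_sub_cancel]⟩, ?_⟩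
  rintro u ⟨hu, huD⟩
  have : v - u = d := hD.injOn huD hdD (by rw [map_sub, hu, sub_zero, hd])
  rw [← this, sub_sub_cancel]

namespace Ginf

def closedNbhdOffsets : Set (ℤ × ℤ) :=
  {0, (1, 0), (-1, 0), (0, 1), (0, -1), (1, 1), (-1, -1)}

theorem eq_or_adj_iff_sub_mem (u v : ℤ × ℤ) :
    (u = v ∨ Ginf.Adj u v) ↔ v - u ∈ closedNbhdOffsets := by
  obtain ⟨a, b⟩ := u
  obtain ⟨c, d⟩ := v
  simp only [Ginf, closedNbhdOffsets, SimpleGraph.fromRel_adj, Set.mem_insert_iff,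
    Set.mem_singleton_iff, Prod.ext_iff, Prod.fst_sub, Prod.snd_sub, Prod.fst_zero,
    Prod.snd_zero, ne_eq]
  omega

def weightMod7 : ℤ × ℤ →+ ZMod 7 :=
  AddMonoidHom.mk' (fun p => ((p.1 + 2 * p.2 : ℤ) : ZMod 7)) fun p q => by
    simp only [Prod.fst_add, Prod.snd_add]
    push_cast
    ring

theorem weightMod7_apply (p : ℤ × ℤ) : weightMod7 p = ((p.1 + 2 * p.2 : ℤ) : ZMod 7) := rfl

theorem bijOn_weightMod7_closedNbhdOffsets :
    Set.BijOn weightMod7 closedNbhdOffsets Set.univ := by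
  refine ⟨Set.mapsTo_univ _ _, ?_, ?_⟩
  · rintro d (rfl | rfl | rfl | rfl | rfl | rfl | rfl) d' (rfl | rfl | rfl | rfl | rfl | rfl | rfl)
      h <;> first | rfl | exact absurd h (by decide)
  · intro r _
    fin_cases r
    exacts [⟨0, by simp [closedNbhdOffsets], rfl⟩, ⟨(1, 0), by simp [closedNbhdOffsets], rfl⟩,
      ⟨(0, 1), by simp [closedNbhdOffsets], rfl⟩, ⟨(1, 1), by simp [closedNbhdOffsets], rfl⟩,
      ⟨(-1, -1), by simp [closedNbhdOffsets], rfl⟩, ⟨(0, -1), by simp [closedNbhdOffsets], rfl⟩,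
      ⟨(-1, 0), by simp [closedNbhdOffsets], rfl⟩]

end Ginf

/-- Let `S = {(x,y) : x + 2y ≡ 0 (mod 7)}`. Every vertex of `G∞` lies in the closed
neighborhood of exactly one element of `S`; in particular `S` is a dominating set of
`G∞` whose elements have pairwise disjoint closed neighborhoods. -/
theorem Ginf_perfect_dominating_set :
    ∀ v : ℤ × ℤ, ∃! u : ℤ × ℤ,
      (7 : ℤ) ∣ (u.1 + 2 * u.2) ∧ (u = v ∨ Ginf.Adj u v) := by
  intro v
  simpa only [Ginf.eq_or_adj_iff_sub_mem, Ginf.weightMod7_apply,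
    ZMod.intCast_zmod_eq_zero_iff_dvd, Nat.cast_ofNat] using
    Ginf.weightMod7.existsUnique_map_eq_zero_and_sub_mem
      Ginf.bijOn_weightMod7_closedNbhdOffsets v
end

section
/- Let T be a finite tree with at least two vertices and let W ⊆ V(T) be a set of m vertices that contains every vertex of T whose degree is not equal to 2. Suppose that every path in T whose two endpoints lie in W and none of whose internal vertices lies in W has length at most p. Then T has at most (m−1)·p edges. -/
/-!
Root the tree at a vertex `r ∈ W`; one exists because a tree has a vertex of degree less than
two. Below every vertex `v` lies a vertex of `W`: walking away from the root through vertices of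
degree two never gets stuck. If `w` is the shallowest such vertex and `v ≠ r`, then `v` lies on
the path from `r` to `w` after the last vertex of `W` preceding `w`. That final stretch is a path
between two vertices of `W` with no internal vertex in `W`, so it has at most `p` vertices besides
its first one. Hence `|V| - 1 ≤ (m - 1) p`, and `|E| = |V| - 1`.
-/

open Finset

namespace SimpleGraph

variable {V : Type*} {G : SimpleGraph V}

theorem Walk.exists_eq_append_of_end_mem {W : Set V} {u v : V} (q : G.Walk u v) (hv : v ∈ W)
    (huv : u ≠ v) :
    ∃ x ∈ W, ∃ (q₁ : G.Walk u x) (q₂ : G.Walk x v), q = q₁.append q₂ ∧ ¬q₁.Nil ∧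
      ∀ y ∈ q₁.support, y ≠ u → y ≠ x → y ∉ W := by
  induction q with
  | nil => exact absurd rfl huv
  | @cons u y v h q ih =>
    by_cases hy : y ∈ W
    · refine ⟨y, hy, cons h nil, q, rfl, not_nil_cons, fun z hz hzu hzy => ?_⟩
      simp_all
    · obtain ⟨x, hx, q₁, q₂, rfl, -, hint⟩ := ih hv fun hyv => hy (hyv ▸ hv)
      refine ⟨x, hx, cons h q₁, q₂, rfl, not_nil_cons, fun z hz hzu hzx => ?_⟩
      rcases List.mem_cons.mp hz with rfl | hz
      · exact absurd rfl hzu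
      by_cases hzy : z = y
      · exact hzy ▸ hy
      · exact hint z hz hzy hzx

namespace IsTree

noncomputable def path (hT : G.IsTree) (u v : V) : G.Walk u v :=
  (hT.existsUnique_path u v).exists.choose

variable (hT : G.IsTree)

lemma isPath_path (u v : V) : (hT.path u v).IsPath :=
  (hT.existsUnique_path u v).exists.choose_spec

lemma eq_path {u v : V} {q : G.Walk u v} (hq : q.IsPath) : q = hT.path u v :=
  (hT.existsUnique_path u v).unique hq (hT.isPath_path u v)

lemma path_self (u : V) : hT.path u u = .nil :=
  (hT.eq_path .nil).symm

lemma takeUntil_path [DecidableEq V] {r u v : V} (hu : u ∈ (hT.path r v).support) :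
    (hT.path r v).takeUntil u hu = hT.path r u :=
  hT.eq_path ((hT.isPath_path r v).takeUntil hu)

lemma length_path_lt_of_mem_support {r u v : V} (hu : u ∈ (hT.path r v).support) (huv : u ≠ v) :
    (hT.path r u).length < (hT.path r v).length := by
  classical
  rw [← hT.takeUntil_path hu]
  exact Walk.length_takeUntil_lt_length hu huv

lemma exists_path_eq_concat (r : V) {x : V} [Fintype (G.neighborSet x)] (hx : 1 < G.degree x) :
    ∃ b, ∃ h : G.Adj x b, hT.path r b = (hT.path r x).concat h := by
  rw [← card_neighborFinset_eq_degree] at hx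
  obtain ⟨b, hb, hba⟩ := exists_mem_ne hx (hT.path r x).penultimate
  rw [mem_neighborFinset] at hb
  have hbx : b ∉ (hT.path r x).support := fun hbx =>
    hba (hT.isAcyclic.eq_penultimate_of_adj_end (hT.isPath_path r x) hb hbx)
  exact ⟨b, hb, (hT.eq_path ((hT.isPath_path r x).concat hbx hb)).symm⟩

section Finite

variable [Fintype V]

lemma exists_degree_lt_two [DecidableRel G.Adj] (hT : G.IsTree) : ∃ v, G.degree v < 2 := by
  have hsum : ∑ v, G.degree v < ∑ _v : V, 2 := by
    have := hT.card_edgeFinset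
    rw [sum_degrees_eq_twice_card_edges, sum_const, card_univ, smul_eq_mul]
    omega
  obtain ⟨v, -, hv⟩ := exists_lt_of_sum_lt hsum
  exact ⟨v, hv⟩

lemma exists_mem_support_path_mem [DecidableRel G.Adj] (r : V) {W : Finset V}
    (hW : ∀ x ∉ W, 1 < G.degree x) (v : V) : ∃ w ∈ W, v ∈ (hT.path r w).support := by
  classical
  obtain ⟨x, hx, hmax⟩ := exists_max_image {x | v ∈ (hT.path r x).support}
    (fun x => (hT.path r x).length) ⟨v, by simp⟩
  rw [mem_filter_univ x] at hx
  refine ⟨x, ?_, hx⟩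
  by_contra hxW
  obtain ⟨b, h, hb⟩ := hT.exists_path_eq_concat r (hW x hxW)
  have hvb : v ∈ (hT.path r b).support := hb ▸ Walk.support_subset_support_concat _ h hx
  have := hmax b ((mem_filter_univ b).mpr hvb)
  rw [hb, Walk.length_concat] at this
  omega

variable [DecidableEq V]

/-- For `w ∈ W` other than the root `r`, the vertices of the path from `r` to `w` that come
after the last vertex of `W` preceding `w`. -/
noncomputable def segment (r : V) (W : Finset V) (w : V) : Finset V :=
  {v | v ∈ (hT.path r w).support ∧
    ∀ u ∈ W, u ∈ (hT.path r w).support → v ∈ (hT.path r u).support → u = w}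

lemma exists_mem_segment [DecidableRel G.Adj] {r : V} {W : Finset V}
    (hW : ∀ x ∉ W, 1 < G.degree x) {v : V} (hv : v ≠ r) :
    ∃ w ∈ W.erase r, v ∈ hT.segment r W w := by
  obtain ⟨w, hw, hmin⟩ := exists_min_image {w ∈ W | v ∈ (hT.path r w).support}
    (fun w => (hT.path r w).length) (by
      obtain ⟨w, hw, hvw⟩ := hT.exists_mem_support_path_mem r hW v
      exact ⟨w, mem_filter.mpr ⟨hw, hvw⟩⟩)
  obtain ⟨hwW, hvw⟩ := mem_filter.mp hw
  have hwr : w ≠ r := by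
    rintro rfl
    rw [hT.path_self, Walk.support_nil, List.mem_singleton] at hvw
    exact hv hvw
  refine ⟨w, mem_erase.mpr ⟨hwr, hwW⟩, (mem_filter_univ v).mpr ⟨hvw, fun u hu huw hvu => ?_⟩⟩
  by_contra hne
  have := hmin u (mem_filter.mpr ⟨hu, hvu⟩)
  have := hT.length_path_lt_of_mem_support huw hne
  omega

lemma exists_isPath_card_segment_le {r : V} {W : Finset V} (hr : r ∈ W) {w : V} (hwr : w ≠ r) :
    ∃ x ∈ W, ∃ q : G.Walk w x, q.IsPath ∧ (∀ y ∈ q.support, y ≠ w → y ≠ x → y ∉ W) ∧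
      #(hT.segment r W w) ≤ q.length := by
  have hpath := (hT.isPath_path r w).reverse
  obtain ⟨x, hx, q₁, q₂, hq, hq₁, hint⟩ :=
    (hT.path r w).reverse.exists_eq_append_of_end_mem (W := W) hr hwr
  rw [hq] at hpath
  have hq₁path := hpath.of_append_left
  have hxw : x ≠ w := fun h => hq₁ (hq₁path.nil_iff_eq.mpr h.symm)
  have hq₂ : q₂.reverse = hT.path r x := hT.eq_path hpath.of_append_right.reverse
  refine ⟨x, hx, q₁, hq₁path, hint, ?_⟩
  have hsupp : ∀ v, v ∈ (hT.path r w).support ↔ v ∈ q₁.support ∨ v ∈ (hT.path r x).support := by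
    intro v
    rw [← List.mem_reverse, ← Walk.support_reverse, hq, Walk.mem_support_append_iff, ← hq₂,
      Walk.support_reverse, List.mem_reverse]
  have hsub : hT.segment r W w ⊆ q₁.support.toFinset.erase x := by
    intro v hv
    obtain ⟨hvw, hmin⟩ := (mem_filter_univ v).mp hv
    have hvx : v ∉ (hT.path r x).support := fun hvx =>
      hxw (hmin x hx ((hsupp x).mpr (Or.inr (Walk.end_mem_support _))) hvx)
    refine mem_erase.mpr ⟨fun h => hvx (h ▸ Walk.end_mem_support _), ?_⟩
    exact List.mem_toFinset.mpr (((hsupp v).mp hvw).resolve_right hvx)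
  calc #(hT.segment r W w) ≤ #(q₁.support.toFinset.erase x) := card_le_card hsub
    _ = #q₁.support.toFinset - 1 := card_erase_of_mem (by simp)
    _ ≤ q₁.support.length - 1 := Nat.sub_le_sub_right (List.toFinset_card_le _) 1
    _ = q₁.length := by rw [Walk.length_support]; rfl

end Finite

end IsTree

end SimpleGraph

theorem tree_edge_bound_general {V : Type*} [Fintype V] [DecidableEq V]
    (G : SimpleGraph V) [DecidableRel G.Adj] (hT : G.IsTree)
    (W : Finset V) (m p : ℕ) (hm : W.card = m)
    (hdeg : ∀ v : V, G.degree v ≠ 2 → v ∈ W)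
    (hpath : ∀ (u v : V) (q : G.Walk u v), q.IsPath → u ∈ W → v ∈ W →
      (∀ x ∈ q.support, x ≠ u → x ≠ v → x ∉ W) → q.length ≤ p) :
    G.edgeFinset.card ≤ (m - 1) * p := by
  obtain ⟨r, hr⟩ : ∃ r, r ∈ W :=
    let ⟨v, hv⟩ := hT.exists_degree_lt_two
    ⟨v, hdeg v hv.ne⟩
  have hW : ∀ x ∉ W, 1 < G.degree x := fun x hx => by
    have := not_imp_comm.mp (hdeg x) hx
    omega
  have hcover : univ.erase r ⊆ (W.erase r).biUnion (hT.segment r W) := fun v hv =>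
    mem_biUnion.mpr (hT.exists_mem_segment hW (ne_of_mem_erase hv))
  have hseg : ∀ w ∈ W.erase r, #(hT.segment r W w) ≤ p := by
    intro w hw
    obtain ⟨hwr, hwW⟩ := mem_erase.mp hw
    obtain ⟨x, hx, q, hq, hint, hcard⟩ := hT.exists_isPath_card_segment_le hr hwr
    exact hcard.trans (hpath w x q hq hwW hx hint)
  calc #G.edgeFinset = #(univ.erase r) := by
        rw [card_erase_of_mem (mem_univ r), card_univ, ← hT.card_edgeFinset]; rfl
    _ ≤ ∑ w ∈ W.erase r, #(hT.segment r W w) := (card_le_card hcover).trans card_biUnion_le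
    _ ≤ ∑ _w ∈ W.erase r, p := sum_le_sum hseg
    _ = (m - 1) * p := by rw [sum_const, card_erase_of_mem hr, hm, smul_eq_mul]

/-- Let `T` be a finite tree with at least two vertices and let `W ⊆ V(T)` be a set of
`m` vertices that contains every vertex of `T` whose degree is not `2`. Suppose every
path in `T` whose two endpoints lie in `W` and none of whose internal vertices lies in
`W` has length at most `p`. Then `T` has at most `(m-1)·p` edges. -/
theorem tree_edge_bound {V : Type*} [Fintype V] [DecidableEq V]
    (G : SimpleGraph V) [DecidableRel G.Adj] (hT : G.IsTree)
    (h2 : 2 ≤ Fintype.card V)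
    (W : Finset V) (m p : ℕ) (hm : W.card = m)
    (hdeg : ∀ v : V, G.degree v ≠ 2 → v ∈ W)
    (hpath : ∀ (u v : V) (q : G.Walk u v), q.IsPath → u ∈ W → v ∈ W →
      (∀ x ∈ q.support, x ≠ u → x ≠ v → x ∉ W) → q.length ≤ p) :
    G.edgeFinset.card ≤ (m - 1) * p :=
  tree_edge_bound_general G hT W m p hm hdeg hpath
end

section
/- Let T be a Steiner tree for U in G with |U| ≥ 2, let U' = U ∪ {v ∈ V(T) : deg_T(v) ≠ 2}, and let P be a path in T of maximum length among all paths in T whose endpoints lie in U' and none of whose internal vertices lies in U'. Let x be the vertex of P at distance ⌊|P|/2⌋ along P from one of its endpoints, where |P| denotes the number of edges of P. Then the graph distance in G from x to every vertex u ∈ U is at least ⌊|P|/2⌋. -/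
/-- A Steiner tree for `U` in `G`: a subgraph `T` of `G` that is a tree, contains `U`
among its vertices, and has the minimum number of vertices among all such trees. -/
def IsSteinerTree {V : Type*} (G : SimpleGraph V) (U : Set V) (T : G.Subgraph) : Prop :=
  T.coe.IsTree ∧ U ⊆ T.verts ∧
    ∀ T' : G.Subgraph, T'.coe.IsTree → U ⊆ T'.verts → T.verts.ncard ≤ T'.verts.ncard

/-!
The internal vertices of `P` have degree 2 in `T` and lie outside `U`. A vertex `y` of `T` that
is not internal to `P` reaches an end of `P` inside `T` without meeting `P`'s interior, since the
only exits from the interior are its two ends; in particular some `u ∈ U` reaches an end `a` this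
way. If `x = P.getVert m` were at distance `d < m` from `u`, replacing the `m - 1` internal
vertices of `P` between `a` and `x` by the `d - 1` internal vertices of a shortest `x`–`u` path
in `G` would give a connected vertex set containing `U` that is smaller than `T`, contradicting
minimality. Applying this from the end `a` or `b` that `u` reaches gives the bound with
`m = ⌊|P|/2⌋` or `m = |P| - ⌊|P|/2⌋ ≥ ⌊|P|/2⌋`.
-/

namespace SimpleGraph

variable {V : Type*} {G : SimpleGraph V}

namespace Walk

variable {u v w : V}

def internalVerts (p : G.Walk u v) : Set V := {w | w ∈ p.support ∧ w ≠ u ∧ w ≠ v}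

lemma internalVerts_reverse (p : G.Walk u v) : p.reverse.internalVerts = p.internalVerts := by
  ext w
  simp only [internalVerts, support_reverse, List.mem_reverse, Set.mem_ofPred_eq]
  tauto

lemma exists_getVert_eq_of_mem_internalVerts {p : G.Walk u v} (hw : w ∈ p.internalVerts) :
    ∃ i, 0 < i ∧ i < p.length ∧ p.getVert i = w := by
  obtain ⟨hws, hwu, hwv⟩ := hw
  obtain ⟨i, rfl, hi⟩ := p.mem_support_iff_exists_getVert.mp hws
  refine ⟨i, Nat.pos_of_ne_zero ?_, lt_of_le_of_ne hi ?_, rfl⟩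
  · rintro rfl
    exact hwu p.getVert_zero
  · rintro rfl
    exact hwv p.getVert_length

lemma exists_walk_avoiding_of_neighborSet_subset {S B : Set V}
    (hS : ∀ s ∈ S, G.neighborSet s ⊆ S ∪ B) {y z : V} (p : G.Walk y z) (hy : y ∉ S)
    (hz : z ∈ S ∪ B) : ∃ b ∈ B, ∃ q : G.Walk y b, ∀ w ∈ q.support, w ∉ S := by
  induction p with
  | nil => exact ⟨_, hz.resolve_left hy, nil, by simpa using hy⟩
  | @cons y y' _ h p ih =>
    by_cases hyB : y ∈ B
    · exact ⟨y, hyB, nil, by simpa using hy⟩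
    have hy' : y' ∉ S := fun h' => (hS y' h' h.symm).elim hy hyB
    obtain ⟨b, hb, q, hq⟩ := ih hy' hz
    exact ⟨b, hb, cons h q, by simpa [hy] using hq⟩

namespace IsPath

variable {p : G.Walk u v}

lemma getVert_mem_internalVerts (hp : p.IsPath) {i : ℕ} (h0 : 0 < i) (hi : i < p.length) :
    p.getVert i ∈ p.internalVerts := by
  refine ⟨p.getVert_mem_support i, fun h => ?_, fun h => ?_⟩
  · have := hp.getVert_injOn (by simp only [Set.mem_ofPred_eq]; omega) (by simp)
      (h.trans p.getVert_zero.symm)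
    omega
  · have := hp.getVert_injOn (by simp only [Set.mem_ofPred_eq]; omega) (by simp)
      (h.trans p.getVert_length.symm)
    omega

lemma internalVerts_eq_image (hp : p.IsPath) :
    p.internalVerts = p.getVert '' Set.Ioo 0 p.length := by
  ext w
  constructor
  · intro hw
    obtain ⟨i, h0, hi, rfl⟩ := exists_getVert_eq_of_mem_internalVerts hw
    exact ⟨i, ⟨h0, hi⟩, rfl⟩
  · rintro ⟨i, ⟨h0, hi⟩, rfl⟩
    exact hp.getVert_mem_internalVerts h0 hi

lemma ncard_internalVerts (hp : p.IsPath) : p.internalVerts.ncard = p.length - 1 := by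
  rw [hp.internalVerts_eq_image, (hp.getVert_injOn.mono fun i hi => le_of_lt hi.2).ncard_image,
    Set.ncard_Ioo_nat]
  omega

lemma internalVerts_take_subset (hp : p.IsPath) (n : ℕ) :
    (p.take n).internalVerts ⊆ p.internalVerts := by
  rw [(hp.take n).internalVerts_eq_image, hp.internalVerts_eq_image, take_length]
  rintro _ ⟨i, ⟨h0, hi⟩, rfl⟩
  refine ⟨i, ⟨h0, by omega⟩, ?_⟩
  rw [take_getVert, min_eq_right (by omega)]

lemma neighborSet_subset (hp : p.IsPath) (hw : w ∈ p.internalVerts)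
    (h2 : (G.neighborSet w).ncard = 2) :
    G.neighborSet w ⊆ p.internalVerts ∪ {u, v} := by
  obtain ⟨i, h0, hi, rfl⟩ := exists_getVert_eq_of_mem_internalVerts hw
  have heq : p.toSubgraph.neighborSet (p.getVert i) = G.neighborSet (p.getVert i) :=
    Set.eq_of_subset_of_ncard_le (p.toSubgraph.neighborSet_subset _)
      (by rw [h2, hp.ncard_neighborSet_toSubgraph_internal_eq_two h0.ne' hi])
      (Set.finite_of_ncard_pos (by omega))
  rw [← heq, hp.neighborSet_toSubgraph_internal h0.ne' hi]
  intro z hz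
  have hzs : z ∈ p.support := by
    rcases hz with rfl | rfl <;> exact p.getVert_mem_support _
  by_cases hzu : z = u
  · exact Or.inr (Or.inl hzu)
  by_cases hzv : z = v
  · exact Or.inr (Or.inr hzv)
  exact Or.inl ⟨hzs, hzu, hzv⟩

end IsPath

end Walk

lemma Subgraph.ncard_coe_neighborSet (H : G.Subgraph) (v : H.verts) :
    (H.coe.neighborSet v).ncard = (H.neighborSet v).ncard := by
  rw [← Nat.card_coe_set_eq, ← Nat.card_coe_set_eq]
  exact Nat.card_congr (H.coeNeighborSetEquiv v)

lemma induce_connected_of_forall_exists_walk {s : Set V} {x : V} (hx : x ∈ s)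
    (h : ∀ y ∈ s, ∃ p : G.Walk x y, ∀ z ∈ p.support, z ∈ s) :
    (G.induce s).Connected := by
  rw [connected_iff_exists_forall_reachable]
  refine ⟨⟨x, hx⟩, fun ⟨y, hy⟩ => ?_⟩
  obtain ⟨p, hp⟩ := h y hy
  exact (p.induce s hp).reachable

lemma exists_isTree_subgraph_verts_eq {s : Set V} (hs : (G.induce s).Connected) :
    ∃ H : G.Subgraph, H.verts = s ∧ H.coe.IsTree := by
  obtain ⟨t, hle, ht⟩ := hs.exists_isTree_le
  let H : G.Subgraph :=
    { verts := s
      Adj := fun v w => ∃ (hv : v ∈ s) (hw : w ∈ s), t.Adj ⟨v, hv⟩ ⟨w, hw⟩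
      adj_sub := fun ⟨_, _, h⟩ => hle h
      edge_vert := fun ⟨hv, _, _⟩ => hv
      symm := ⟨fun _ _ ⟨hv, hw, h⟩ => ⟨hw, hv, h.symm⟩⟩ }
  refine ⟨H, rfl, ?_⟩
  convert ht
  ext ⟨v, hv⟩ ⟨w, hw⟩
  exact ⟨fun ⟨_, _, h⟩ => h, fun h => ⟨hv, hw, h⟩⟩

lemma Subgraph.induce_connected_compl_internalVerts_union {T : G.Subgraph}
    (hT : T.coe.Connected) {a x u : T.verts} {P : T.coe.Walk a x} (hP : P.IsPath)
    (hdeg : ∀ w ∈ P.internalVerts, (T.coe.neighborSet w).ncard = 2)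
    (q : T.coe.Walk u a) (hq : ∀ w ∈ q.support, w ∉ P.internalVerts) (g : G.Walk x u) :
    (G.induce (Subtype.val '' P.internalVertsᶜ ∪ {v | v ∈ g.support})).Connected := by
  classical
  set W := Subtype.val '' P.internalVertsᶜ ∪ {v | v ∈ g.support}
  have hmapW : ∀ {y z : T.verts} (r : T.coe.Walk y z),
      (∀ w ∈ r.support, w ∉ P.internalVerts) →
      ∀ v ∈ (r.map T.hom).support, v ∈ W := by
    intro y z r hr v hv
    rw [Walk.support_map, List.mem_map] at hv
    obtain ⟨w, hw, rfl⟩ := hv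
    exact Or.inl ⟨w, hr w hw, rfl⟩
  have hgW : ∀ v ∈ g.support, v ∈ W := fun v hv => Or.inr hv
  have hxa : ∃ r : G.Walk x a, ∀ v ∈ r.support, v ∈ W :=
    ⟨g.append (q.map T.hom), fun v hv =>
      ((Walk.mem_support_append_iff _ _).mp hv).elim (hgW v) (hmapW q hq v)⟩
  refine induce_connected_of_forall_exists_walk (hgW x g.start_mem_support) ?_
  rintro y (⟨y, hy, rfl⟩ | hy)
  · obtain ⟨c, hc, r, hr⟩ := Walk.exists_walk_avoiding_of_neighborSet_subset
      (fun s hs => hP.neighborSet_subset hs (hdeg s hs)) (hT.preconnected y a).some hy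
      (Or.inr (Or.inl rfl))
    have hyW : ∀ v ∈ (r.map T.hom).reverse.support, v ∈ W := fun v hv =>
      hmapW r hr v (by rwa [Walk.support_reverse, List.mem_reverse] at hv)
    rcases hc with rfl | rfl
    · obtain ⟨r', hr'⟩ := hxa
      exact ⟨r'.append (r.map T.hom).reverse, fun v hv =>
        ((Walk.mem_support_append_iff _ _).mp hv).elim (hr' v) (hyW v)⟩
    · exact ⟨(r.map T.hom).reverse, hyW⟩
  · exact ⟨g.takeUntil y hy, fun v hv => hgW v (g.support_takeUntil_subset_support hy hv)⟩

end SimpleGraph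

open SimpleGraph

namespace IsSteinerTree

variable {V : Type*} {G : SimpleGraph V} {U : Set V} {T : G.Subgraph}

lemma ncard_verts_le (hT : IsSteinerTree G U T) {s : Set V} (hs : (G.induce s).Connected)
    (hUs : U ⊆ s) : T.verts.ncard ≤ s.ncard := by
  obtain ⟨H, rfl, hH⟩ := exists_isTree_subgraph_verts_eq hs
  exact hT.2.2 H hH hUs

theorem length_le_dist [Finite V] (hT : IsSteinerTree G U T) {a x u : T.verts}
    {P : T.coe.Walk a x} (hP : P.IsPath)
    (hinner : ∀ w ∈ P.internalVerts, (w : V) ∉ U ∧ (T.coe.neighborSet w).ncard = 2)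
    (hx : (x : V) ∉ U) (hu : (u : V) ∈ U)
    (q : T.coe.Walk u a) (hq : ∀ w ∈ q.support, w ∉ P.internalVerts) :
    P.length ≤ G.dist x u := by
  by_contra! hlt
  obtain ⟨g, hg, hglen⟩ : ∃ g : G.Walk x u, g.IsPath ∧ g.length = G.dist x u :=
    ((hT.1.connected.preconnected x u).map T.hom).exists_path_of_dist
  have hxu : (x : V) ≠ u := fun h => hx (h ▸ hu)
  have hg0 : 0 < g.length := Nat.pos_of_ne_zero fun h => hxu (Walk.eq_of_length_eq_zero h)
  set S := P.internalVerts
  set W := Subtype.val '' Sᶜ ∪ {v | v ∈ g.support}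
  have hUW : U ⊆ W := fun v hv =>
    Or.inl ⟨⟨v, hT.2.1 hv⟩, fun hS => (hinner _ hS).1 hv, rfl⟩
  have hcard_le : T.verts.ncard ≤ W.ncard :=
    hT.ncard_verts_le (T.induce_connected_compl_internalVerts_union hT.1.connected hP
      (fun w hw => (hinner w hw).2) q hq g) hUW
  have hWg : W ⊆ Subtype.val '' Sᶜ ∪ g.internalVerts := by
    rintro v (hv | hv)
    · exact Or.inl hv
    by_cases hvx : v = x
    · exact Or.inl ⟨x, fun h => h.2.2 rfl, hvx.symm⟩
    by_cases hvu : v = u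
    · exact Or.inl ⟨u, fun h => (hinner u h).1 hu, hvu.symm⟩
    exact Or.inr ⟨hv, hvx, hvu⟩
  have hWcard : W.ncard ≤ Sᶜ.ncard + (g.length - 1) := by
    calc W.ncard ≤ (Subtype.val '' Sᶜ ∪ g.internalVerts).ncard := Set.ncard_le_ncard hWg
      _ ≤ (Subtype.val '' Sᶜ).ncard + g.internalVerts.ncard := Set.ncard_union_le _ _
      _ = Sᶜ.ncard + (g.length - 1) := by
        rw [Set.ncard_image_of_injective _ Subtype.val_injective, hg.ncard_internalVerts]
  have hTcard : S.ncard + Sᶜ.ncard = T.verts.ncard := Set.ncard_add_ncard_compl S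
  rw [hP.ncard_internalVerts] at hTcard
  omega

theorem le_dist_getVert [Finite V] (hT : IsSteinerTree G U T) {a b u : T.verts}
    {P : T.coe.Walk a b} (hP : P.IsPath)
    (hinner : ∀ w ∈ P.internalVerts, (w : V) ∉ U ∧ (T.coe.neighborSet w).ncard = 2)
    {m : ℕ} (hm0 : 0 < m) (hmP : m < P.length) (hu : (u : V) ∈ U)
    (q : T.coe.Walk u a) (hq : ∀ w ∈ q.support, w ∉ P.internalVerts) :
    m ≤ G.dist (P.getVert m) u := by
  have hsub := hP.internalVerts_take_subset m
  have h := hT.length_le_dist (hP.take m) (fun w hw => hinner w (hsub hw))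
    (hinner _ (hP.getVert_mem_internalVerts hm0 hmP)).1 hu q fun w hw h' => hq w hw (hsub h')
  rwa [Walk.take_length, min_eq_left hmP.le] at h

end IsSteinerTree

theorem steinerTree_middle_vertex_far_from_U_general {V : Type*} [Fintype V]
    (G : SimpleGraph V) (U : Set V)
    (T : G.Subgraph) (hT : IsSteinerTree G U T)
    (U' : Set V) (hU' : U' = U ∪ {v ∈ T.verts | (T.neighborSet v).ncard ≠ 2})
    (a b : T.verts) (P : T.coe.Walk a b) (hP : P.IsPath)
    (hint : ∀ x ∈ P.support, x ≠ a → x ≠ b → (x : V) ∉ U')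
    (x : T.verts) (hx : x = P.getVert (P.length / 2)) :
    ∀ u ∈ U, P.length / 2 ≤ G.dist (x : V) u := by
  intro u hu
  have hinner : ∀ w ∈ P.internalVerts, (w : V) ∉ U ∧ (T.coe.neighborSet w).ncard = 2 := by
    rintro w ⟨hw, hwa, hwb⟩
    have h := hint w hw hwa hwb
    simp only [hU', Set.mem_union, Set.mem_ofPred_eq, not_or, not_and, not_not] at h
    exact ⟨h.1, (T.ncard_coe_neighborSet w).trans (h.2 w.2)⟩
  obtain ⟨c, hc, q, hq⟩ := Walk.exists_walk_avoiding_of_neighborSet_subset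
    (fun s hs => hP.neighborSet_subset hs (hinner s hs).2)
    (hT.1.connected.preconnected ⟨u, hT.2.1 hu⟩ a).some (fun h => (hinner _ h).1 hu)
    (Or.inr (Or.inl rfl))
  obtain hzero | hpos := Nat.eq_zero_or_pos (P.length / 2)
  · simp [hzero]
  subst hx
  rcases hc with rfl | rfl
  · exact hT.le_dist_getVert hP hinner hpos (by omega) hu q hq
  · rw [← P.internalVerts_reverse] at hinner hq
    have h := hT.le_dist_getVert hP.reverse hinner (m := P.length - P.length / 2)
      (by omega) (by rw [Walk.length_reverse]; omega) hu q hq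
    rw [Walk.getVert_reverse, Nat.sub_sub_self (by omega)] at h
    exact le_trans (by omega) h

/-- Let `T` be a Steiner tree for `U` in `G` with `|U| ≥ 2`, let
`U' = U ∪ {v ∈ V(T) : deg_T(v) ≠ 2}`, and let `P` be a path in `T` of maximum length
among all paths in `T` whose endpoints lie in `U'` and none of whose internal vertices
lies in `U'`. If `x` is the vertex of `P` at distance `⌊|P|/2⌋` along `P` from one of
its endpoints, then the graph distance in `G` from `x` to every `u ∈ U` is at least
`⌊|P|/2⌋`. -/
theorem steinerTree_middle_vertex_far_from_U {V : Type*} [Fintype V]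
    (G : SimpleGraph V) (hG : G.Connected) (U : Set V) (hU2 : 2 ≤ U.ncard)
    (T : G.Subgraph) (hT : IsSteinerTree G U T)
    (U' : Set V) (hU' : U' = U ∪ {v ∈ T.verts | (T.neighborSet v).ncard ≠ 2})
    (a b : T.verts) (P : T.coe.Walk a b) (hP : P.IsPath)
    (ha : (a : V) ∈ U') (hb : (b : V) ∈ U')
    (hint : ∀ x ∈ P.support, x ≠ a → x ≠ b → (x : V) ∉ U')
    (hmax : ∀ (c d : T.verts) (Q : T.coe.Walk c d), Q.IsPath →
      (c : V) ∈ U' → (d : V) ∈ U' →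
      (∀ x ∈ Q.support, x ≠ c → x ≠ d → (x : V) ∉ U') → Q.length ≤ P.length)
    (x : T.verts) (hx : x = P.getVert (P.length / 2)) :
    ∀ u ∈ U, P.length / 2 ≤ G.dist (x : V) u :=
  steinerTree_middle_vertex_far_from_U_general G U T hT U' hU' a b P hP hint x hx
end
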